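/- arXiv:2501.11912 — 4 statements merged into one kernel-verified Lean document; each statement's English description precedes it below -/
import Mathlib

section
/- Let G be a group acting on a set X, and let G_1, ..., G_m (m ≥ 2) be subgroups of G such that G is generated by their union and at least one G_i has order greater than 2. Suppose there exist pairwise disjoint nonempty subsets X_1, ..., X_m of X such that for all i ≠ s and every nontrivial g ∈ G_i, we have g • X_s ⊆ X_i. Then G is isomorphic to the free product G_1 * G_2 * ... * G_m. -/
/-- Ping-pong lemma (free product version): if a group `G` acts on a set `X`,
`G` is generated by subgroups `H 1, ..., H m` (`m ≥ 2`), at least one of which has order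
greater than 2, and there are pairwise disjoint nonempty subsets `Xs 1, ..., Xs m` of `X`
with `g • Xs s ⊆ Xs i` for every nontrivial `g ∈ H i` and `i ≠ s`, then the natural map
from the free product of the `H i` to `G` is an isomorphism. -/
theorem stmt0 {G X : Type*} [Group G] [MulAction G X] {m : ℕ} (hm : 2 ≤ m)
    (H : Fin m → Subgroup G)
    (hgen : Subgroup.closure (⋃ i, (H i : Set G)) = ⊤)
    (hbig : ∃ i, 2 < Cardinal.mk (H i))
    (Xs : Fin m → Set X) (hne : ∀ i, (Xs i).Nonempty)
    (hdisj : Pairwise (Function.onFun Disjoint Xs))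
    (hpp : ∀ i s, i ≠ s → ∀ g ∈ H i, g ≠ 1 → ∀ x ∈ Xs s, g • x ∈ Xs i) :
    Function.Bijective (Monoid.CoprodI.lift (fun i => (H i).subtype)) := by
  haveI : Nontrivial (Fin m) := ⟨⟨⟨0, by omega⟩, ⟨1, by omega⟩, by simp [Fin.ext_iff]⟩⟩
  constructor
  · apply Monoid.CoprodI.lift_injective_of_ping_pong (fun i => (H i).subtype)
      (Or.inr (by obtain ⟨i, hi⟩ := hbig; exact ⟨i, by exact_mod_cast Order.succ_le_of_lt hi⟩))
      Xs hne hdisj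
    intro i j hij h hn x hx
    obtain ⟨y, hy, rfl⟩ := hx
    exact hpp i j hij h h.2 (by simpa using hn) y hy
  · rw [← MonoidHom.range_eq_top, Monoid.CoprodI.range_eq_iSup]
    rw [← hgen, Subgroup.closure_iUnion]
    simp [Subgroup.subtype_range, Subgroup.closure_eq]
end

section
/- Suppose a group G is generated by elements g_1, ..., g_k and acts on a set X. If there exist pairwise disjoint nonempty subsets X_1, ..., X_k of X such that g_i^p • X_j ⊆ X_i for every nonzero integer p and all i ≠ j (with k ≥ 2), then G is a free group of rank k, i.e., the natural homomorphism from the free group on k generators sending the i-th generator to g_i is an isomorphism onto G. -/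
open Monoid.CoprodI Cardinal Pointwise

/-- Ping-pong lemma (free group version): if `G` is generated by `g 1, ..., g k` (`k ≥ 2`)
acting on `X`, with pairwise disjoint nonempty subsets `Xs 1, ..., Xs k` satisfying
`g i ^ p • Xs j ⊆ Xs i` for all nonzero `p` and `i ≠ j`, then the natural homomorphism from
the free group on `k` generators sending the `i`-th generator to `g i` is an isomorphism
onto `G`. -/
theorem stmt1 {G X : Type*} [Group G] [MulAction G X] {k : ℕ} (hk : 2 ≤ k)
    (g : Fin k → G) (hgen : Subgroup.closure (Set.range g) = ⊤)
    (Xs : Fin k → Set X) (hne : ∀ i, (Xs i).Nonempty)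
    (hdisj : Pairwise (Function.onFun Disjoint Xs))
    (hpp : ∀ i j, i ≠ j → ∀ p : ℤ, p ≠ 0 → ∀ x ∈ Xs j, g i ^ p • x ∈ Xs i) :
    Function.Bijective (FreeGroup.lift g) := by
  haveI : Nontrivial (Fin k) := Fin.nontrivial_iff_two_le.mpr hk
  constructor
  · -- injectivity, via the ping-pong lemma for free products
    have heq : (FreeGroup.lift g : FreeGroup (Fin k) →* G) =
        (Monoid.CoprodI.lift fun i => FreeGroup.lift fun _ => g i).comp
          (@freeGroupEquivCoprodI (Fin k)).toMonoidHom := by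
      ext i
      simp
    rw [heq, MonoidHom.coe_comp]
    refine Function.Injective.comp ?_ (MulEquiv.injective freeGroupEquivCoprodI)
    let H : Fin k → Type _ := fun _ => FreeGroup Unit
    let f : ∀ i, H i →* G := fun i => FreeGroup.lift fun _ => g i
    apply lift_injective_of_ping_pong f _ Xs hne hdisj
    · rintro i j hij
      refine FreeGroup.freeGroupUnitEquivInt.forall_congr_left.mpr ?_
      intro n hne1
      change FreeGroup.lift (fun _ => g i) (FreeGroup.of () ^ n) • Xs j ⊆ Xs i
      simp only [map_zpow, FreeGroup.lift_apply_of]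
      have hnne0 : n ≠ 0 := by
        rintro rfl
        apply hne1
        simp [H, FreeGroup.freeGroupUnitEquivInt]
      rintro x ⟨y, hy, rfl⟩
      exact hpp i j hij n hnne0 y hy
    · right
      refine ⟨⟨0, by omega⟩, ?_⟩
      rw [FreeGroup.freeGroupUnitEquivInt.cardinal_eq, Cardinal.mk_denumerable]
      exact (Cardinal.nat_lt_aleph0 3).le
  · -- surjectivity
    rw [← MonoidHom.range_eq_top, FreeGroup.range_lift_eq_closure, hgen]
end

section
/- If a group G acts on a set X and there are pairwise disjoint nonempty subsets X_1, ..., X_m (m ≥ 2) of X and subgroups G_1, ..., G_m of G with g • X_s ⊆ X_i for all nontrivial g ∈ G_i and i ≠ s, and some G_i has order at least 3, then for any nontrivial reduced word g = h_1 h_2 ... h_r with consecutive letters from distinct subgroups (each h_t a nontrivial element of some G_{i_t}, i_t ≠ i_{t+1}), g is a nontrivial element of G. -/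
/-!
The letters `h t` form a nonempty reduced word in the free product of the `H i`, and the ping-pong
lemma (`Monoid.CoprodI.empty_of_word_prod_eq_one`) says that the canonical map from the free
product to `G` sends no such word to `1`: the word moves a point of some `Xs s` into a set
disjoint from `Xs s`, after conjugating by a nontrivial element of a subgroup of order at least 3
when the first and last letters come from different subgroups.
-/

namespace Monoid.CoprodI.Word

variable {ι : Type*} {M : ι → Type*} [∀ i, Monoid (M i)]

def ofFn {r : ℕ} (k : Fin r → ι) (a : ∀ t, M (k t)) (ha : ∀ t, a t ≠ 1)
    (hk : ∀ t : Fin r, ∀ ht : t.val + 1 < r, k t ≠ k ⟨t.val + 1, ht⟩) : Word M where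
  toList := List.ofFn fun t => ⟨k t, a t⟩
  ne_one := by
    simp only [List.mem_ofFn]
    rintro _ ⟨t, rfl⟩
    exact ha t
  chain_ne := by
    rw [List.isChain_iff_getElem]
    intro i hi
    simp only [List.length_ofFn] at hi
    simpa using hk ⟨i, by omega⟩ hi

variable {r : ℕ} {k : Fin r → ι} {a : ∀ t, M (k t)} {ha : ∀ t, a t ≠ 1}
  {hk : ∀ t : Fin r, ∀ ht : t.val + 1 < r, k t ≠ k ⟨t.val + 1, ht⟩}

theorem ofFn_ne_empty (hr : 0 < r) : ofFn k a ha hk ≠ empty := by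
  intro h
  have := congrArg (List.length ∘ toList) h
  simp [ofFn, empty] at this
  omega

theorem prod_ofFn : (ofFn k a ha hk).prod = (List.ofFn fun t => of (a t)).prod := by
  simp [prod, ofFn, List.map_ofFn, Function.comp_def]

end Monoid.CoprodI.Word

open Monoid.CoprodI Pointwise in
/-- Injectivity step of the ping-pong lemma: under the ping-pong hypotheses (pairwise
disjoint nonempty sets `Xs i`, `g • Xs s ⊆ Xs i` for nontrivial `g ∈ H i` and `i ≠ s`,
some `H i` of order at least 3), every nonempty reduced word `h 1 * h 2 * ⋯ * h r` with
each `h t` a nontrivial element of `H (ι t)` and consecutive indices distinct is a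
nontrivial element of `G`. -/
theorem stmt9 {G X : Type*} [Group G] [MulAction G X] {m : ℕ} (hm : 2 ≤ m)
    (H : Fin m → Subgroup G) (Xs : Fin m → Set X)
    (hne : ∀ i, (Xs i).Nonempty)
    (hdisj : Pairwise (Function.onFun Disjoint Xs))
    (hpp : ∀ i s, i ≠ s → ∀ g ∈ H i, g ≠ 1 → ∀ x ∈ Xs s, g • x ∈ Xs i)
    (hbig : ∃ i, 3 ≤ Cardinal.mk (H i))
    {r : ℕ} (hr : 0 < r) (ι : Fin r → Fin m) (h : Fin r → G)
    (hmem : ∀ t, h t ∈ H (ι t)) (hnt : ∀ t, h t ≠ 1)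
    (halt : ∀ t : Fin r, ∀ ht : t.val + 1 < r, ι t ≠ ι ⟨t.val + 1, ht⟩) :
    (List.ofFn h).prod ≠ 1 := by
  have : Nontrivial (Fin m) := Fin.nontrivial_iff_two_le.mpr hm
  let f i : H i →* G := (H i).subtype
  let w : Word fun i => H i :=
    .ofFn ι (fun t => ⟨h t, hmem t⟩) (fun t => by simpa using hnt t) halt
  have hw : lift f w.prod = (List.ofFn h).prod := by
    simp [w, f, Word.prod_ofFn, map_list_prod, List.map_ofFn, Function.comp_def]
  have hpp' : Pairwise fun i j => ∀ g : H i, g ≠ 1 → f i g • Xs j ⊆ Xs i :=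
    fun i s his g hg => Set.smul_set_subset_iff.mpr fun x hx =>
      hpp i s his g g.2 (by simpa using hg) x hx
  intro h1
  exact Word.ofFn_ne_empty hr <|
    empty_of_word_prod_eq_one f (Or.inr hbig) Xs hne hdisj hpp' (hw.trans h1)
end

section
/- Suppose a, b are elements of a group G acting on a set X, and there exist disjoint nonempty subsets A, B ⊆ X with a^p • B ⊆ A for all p ≠ 0 and b^q • A ⊆ B for all q ≠ 0. Then no nontrivial alternating product a^{p_1} b^{q_1} a^{p_2} b^{q_2} ... (all exponents nonzero) equals the identity; equivalently ⟨a⟩ ∩ ⟨b⟩ = {1} and ⟨a, b⟩ ≅ ℤ * ℤ. -/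
/-!
Nonzero powers of `a` map `B` into `A` and nonzero powers of `b` map `A` into `B`: this is the
ping-pong configuration for the free product of two copies of `ℤ ≃ FreeGroup Unit`. The ping-pong
lemma for free products (`Monoid.CoprodI.lift_injective_of_ping_pong`) says that a nonempty reduced
word, such as an alternating product, never evaluates to `1`; its side condition that some factor
has at least three elements holds because `ℤ` is infinite. Freeness of `⟨a, b⟩` follows since
`FreeGroup ι` is the free product of copies of `FreeGroup Unit`.
-/

open Monoid CoprodI Cardinal
open scoped Function Pointwise

namespace FreeGroup

theorem of_unit_zpow_eq_one_iff {n : ℤ} : of () ^ n = 1 ↔ n = 0 := by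
  refine ⟨fun h => freeGroupUnitEquivInt.symm.injective ?_, fun h => by rw [h, zpow_zero]⟩
  exact h.trans (zpow_zero _).symm

theorem three_le_mk_unit : 3 ≤ #(FreeGroup Unit) := by
  rw [freeGroupUnitEquivInt.cardinal_eq, Cardinal.mk_denumerable]
  exact natCast_le_aleph0

end FreeGroup

section PingPong

variable {ι G α : Type*} [Group G] [MulAction G α] (g : ι → G) (X : ι → Set α)

theorem pairwise_lift_smul_subset_of_zpow
    (hpp : Pairwise fun i j => ∀ n : ℤ, n ≠ 0 → g i ^ n • X j ⊆ X i) :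
    Pairwise fun i j => ∀ h : FreeGroup Unit, h ≠ 1 →
      FreeGroup.lift (fun _ => g i) h • X j ⊆ X i := by
  intro i j hij
  refine FreeGroup.freeGroupUnitEquivInt.symm.forall_congr_right.mp fun n hn => ?_
  have hn0 : n ≠ 0 := mt FreeGroup.of_unit_zpow_eq_one_iff.mpr hn
  simpa [FreeGroup.freeGroupUnitEquivInt] using hpp hij n hn0

variable [Nontrivial ι] (hXne : ∀ i, (X i).Nonempty) (hXdisj : Pairwise (Disjoint on X))
  (hpp : Pairwise fun i j => ∀ n : ℤ, n ≠ 0 → g i ^ n • X j ⊆ X i)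
include hXne hXdisj hpp

theorem prod_ofFn_zpow_ne_one_of_ping_pong {r : ℕ} (hr : 0 < r) (gen : Fin r → ι)
    (hgen : ∀ (t : Fin r) (ht : t.val + 1 < r), gen t ≠ gen ⟨t.val + 1, ht⟩)
    (e : Fin r → ℤ) (he : ∀ t, e t ≠ 0) :
    (List.ofFn fun t => g (gen t) ^ e t).prod ≠ 1 := by
  let w : Word fun _ : ι => FreeGroup Unit :=
    { toList := List.ofFn fun t => ⟨gen t, FreeGroup.of () ^ e t⟩
      ne_one := by
        simp only [List.mem_ofFn, forall_exists_index]
        rintro _ t rfl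
        exact mt FreeGroup.of_unit_zpow_eq_one_iff.mp (he t)
      chain_ne := List.isChain_ofFn.mpr fun t ht => hgen ⟨t, by omega⟩ ht }
  have hw : w ≠ Word.empty := by
    intro h
    have := congrArg (fun w => w.toList.length) h
    simp [w, Word.empty] at this
    omega
  intro h1
  refine hw (empty_of_word_prod_eq_one (fun i => FreeGroup.lift fun _ => g i)
    (.inr ⟨Classical.arbitrary ι, FreeGroup.three_le_mk_unit⟩) X hXne hXdisj
    (pairwise_lift_smul_subset_of_zpow g X hpp) ?_)
  simpa [w, Word.prod, List.map_ofFn, Function.comp_def, map_list_prod] using h1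

theorem closure_singleton_inf_eq_bot_of_ping_pong {i j : ι} (hij : i ≠ j) :
    Subgroup.closure {g i} ⊓ Subgroup.closure {g j} = ⊥ := by
  refine (Subgroup.eq_bot_iff_forall _).mpr fun x hx => ?_
  obtain ⟨⟨p, rfl⟩, ⟨q, hq⟩⟩ := And.imp Subgroup.mem_closure_singleton.mp
    Subgroup.mem_closure_singleton.mp (Subgroup.mem_inf.mp hx)
  by_contra hx1
  have hp : p ≠ 0 := by rintro rfl; exact hx1 (zpow_zero _)
  have hq0 : q ≠ 0 := by rintro rfl; rw [zpow_zero] at hq; exact hx1 hq.symm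
  refine prod_ofFn_zpow_ne_one_of_ping_pong g X hXne hXdisj hpp two_pos ![i, j] ?_ ![p, -q] ?_ ?_
  · intro t ht
    obtain rfl : t = 0 := Fin.ext (by omega)
    simpa using hij
  · intro t; fin_cases t <;> simpa
  · simp [List.ofFn_succ, hq]

theorem injective_lift_of_zpow_ping_pong : Function.Injective (FreeGroup.lift g) := by
  have : FreeGroup.lift g =
      (CoprodI.lift fun i => FreeGroup.lift fun _ => g i).comp
        (freeGroupEquivCoprodI (ι := ι)).toMonoidHom := by
    ext i
    simp
  rw [this, MonoidHom.coe_comp]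
  have hcoprod := lift_injective_of_ping_pong _
    (.inr ⟨Classical.arbitrary ι, FreeGroup.three_le_mk_unit⟩) X hXne hXdisj
    (pairwise_lift_smul_subset_of_zpow g X hpp)
  exact hcoprod.comp (freeGroupEquivCoprodI (ι := ι)).injective

theorem nonempty_closure_range_mulEquiv_freeGroup_of_ping_pong :
    Nonempty (Subgroup.closure (Set.range g) ≃* FreeGroup ι) :=
  ⟨(MulEquiv.subgroupCongr (FreeGroup.range_lift_eq_closure (f := g)).symm).trans
    (MonoidHom.ofInjective (injective_lift_of_zpow_ping_pong g X hXne hXdisj hpp)).symm⟩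

end PingPong

/-- Two-element ping-pong: if `a, b ∈ G` act on `X` with disjoint nonempty subsets `A, B`
satisfying `a ^ p • B ⊆ A` and `b ^ q • A ⊆ B` for all nonzero `p, q`, then no nonempty
alternating product of nonzero powers of `a` and `b` equals the identity; equivalently
`⟨a⟩ ∩ ⟨b⟩ = {1}` and `⟨a, b⟩ ≅ ℤ * ℤ` (the free group on two generators). -/
theorem stmt17 {G X : Type*} [Group G] [MulAction G X] (a b : G)
    (A B : Set X) (hA : A.Nonempty) (hB : B.Nonempty) (hd : Disjoint A B)
    (ha : ∀ p : ℤ, p ≠ 0 → ∀ x ∈ B, a ^ p • x ∈ A)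
    (hb : ∀ q : ℤ, q ≠ 0 → ∀ x ∈ A, b ^ q • x ∈ B) :
    (∀ r : ℕ, 0 < r → ∀ gen : Fin r → Bool,
      (∀ t : Fin r, ∀ ht : t.val + 1 < r, gen t ≠ gen ⟨t.val + 1, ht⟩) →
      ∀ e : Fin r → ℤ, (∀ t, e t ≠ 0) →
      (List.ofFn (fun t => (if gen t then a else b) ^ e t)).prod ≠ 1) ∧
    (Subgroup.closure ({a} : Set G)) ⊓ (Subgroup.closure ({b} : Set G)) = ⊥ ∧
    Nonempty ((Subgroup.closure ({a, b} : Set G)) ≃* FreeGroup Bool) := by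
  let g : Bool → G := fun i => if i then a else b
  let S : Bool → Set X := fun i => cond i A B
  have hSne : ∀ i, (S i).Nonempty := Bool.forall_bool.mpr ⟨hB, hA⟩
  have hSdisj : Pairwise (Disjoint on S) := pairwise_disjoint_on_bool.mpr hd
  have hpp : Pairwise fun i j => ∀ n : ℤ, n ≠ 0 → g i ^ n • S j ⊆ S i := by
    intro i j hij n hn
    cases i <;> cases j
    · exact absurd rfl hij
    · exact Set.smul_set_subset_iff.mpr (hb n hn)
    · exact Set.smul_set_subset_iff.mpr (ha n hn)
    · exact absurd rfl hij
  have hrange : Set.range g = {a, b} :=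
    Set.range_ite_const ⟨true, rfl⟩ ⟨false, Bool.false_ne_true⟩
  refine ⟨fun r hr gen hgen e he => ?_, ?_, ?_⟩
  · exact prod_ofFn_zpow_ne_one_of_ping_pong g S hSne hSdisj hpp hr gen hgen e he
  · exact closure_singleton_inf_eq_bot_of_ping_pong g S hSne hSdisj hpp (i := true) (j := false)
      nofun
  · rw [← hrange]
    exact nonempty_closure_range_mulEquiv_freeGroup_of_ping_pong g S hSne hSdisj hpp
end
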